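/- For all nonnegative integers $n$: $\sum_{k=0}^{n} q^k \binom{k+j-1}{k}_{q^2}\binom{n-k+j}{j}_{q^2} = \binom{n+2j}{n}_q$ for every positive integer $j$, as an identity of polynomials in $q$. -/
import Mathlib


/- The partition identity (3.30) of Berkovich–Warnaar:
`∑_{k=0}^n q^k [k+j-1, k]_{q²} [n-k+j, j]_{q²} = [n+2j, n]_q`
for every positive integer `j`; a polynomial identity in q, stated in
`RatFunc ℚ` with `q = RatFunc.X`. -/

open Finset

noncomputable section

def qPoch {F : Type*} [Field F] (a x : F) (n : ℕ) : F :=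
  ∏ i ∈ Finset.range n, (1 - a * x ^ i)

def qBinom {F : Type*} [Field F] (x : F) (n k : ℤ) : F :=
  if 0 ≤ k ∧ k ≤ n then
    qPoch x x n.toNat / (qPoch x x k.toNat * qPoch x x (n - k).toNat)
  else 0

def q : RatFunc ℚ := RatFunc.X

lemma one_sub_q_pow_ne (t : ℕ) (ht : 0 < t) : (1 : RatFunc ℚ) - q ^ t ≠ 0 := by
  intro h
  have h2 : (q : RatFunc ℚ) ^ t = 1 := (sub_eq_zero.mp h).symm
  rw [q, RatFunc.X, ← map_pow, ← map_one (algebraMap (Polynomial ℚ) (RatFunc ℚ))] at h2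
  have h4 := congrArg Polynomial.natDegree (RatFunc.algebraMap_injective ℚ h2)
  simp [Polynomial.natDegree_X_pow] at h4
  omega

lemma qPoch_succ {F : Type*} [Field F] (x : F) (n : ℕ) :
    qPoch x x (n + 1) = qPoch x x n * (1 - x * x ^ n) := Finset.prod_range_succ _ _

lemma qPoch_zero {F : Type*} [Field F] (x : F) : qPoch x x 0 = 1 := Finset.prod_range_zero _

lemma qPoch_q_pow_ne (m : ℕ) (hm : 0 < m) (i : ℕ) : qPoch (q ^ m) (q ^ m) i ≠ 0 := by
  refine Finset.prod_ne_zero_iff.mpr fun a _ => ?_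
  rw [← pow_mul, ← pow_add]
  exact one_sub_q_pow_ne _ (by positivity)

lemma hq : ∀ i, qPoch q q i ≠ 0 := by
  have := qPoch_q_pow_ne 1 one_pos; simpa using this

lemma hq2 : ∀ i, qPoch (q ^ 2) (q ^ 2) i ≠ 0 := qPoch_q_pow_ne 2 two_pos

/-- natural-index q-binomial -/
def nb {F : Type*} [Field F] (x : F) (m k : ℕ) : F :=
  if k ≤ m then qPoch x x m / (qPoch x x k * qPoch x x (m - k)) else 0

variable {F : Type*} [Field F] {x : F}

lemma nb_of_gt {m k : ℕ} (h : m < k) : nb x m k = 0 := if_neg (by omega)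

lemma nb_zero (hx : ∀ i, qPoch x x i ≠ 0) (m : ℕ) : nb x m 0 = 1 := by
  rw [nb, if_pos (Nat.zero_le m)]
  simp [qPoch_zero, div_self (hx m)]

lemma nb_self (hx : ∀ i, qPoch x x i ≠ 0) (m : ℕ) : nb x m m = 1 := by
  rw [nb, if_pos le_rfl]
  simp [qPoch_zero, div_self (hx m)]

lemma nb_symm {m k : ℕ} (h : k ≤ m) : nb x m k = nb x m (m - k) := by
  rw [nb, nb, if_pos h, if_pos (Nat.sub_le m k)]
  rw [Nat.sub_sub_self h, mul_comm]

lemma pascal1 (hx : ∀ i, qPoch x x i ≠ 0) (m k : ℕ) :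
    nb x (m + 1) (k + 1) = nb x m (k + 1) + x ^ (m - k) * nb x m k := by
  rcases lt_or_ge m k with h | h
  · rw [nb_of_gt (by omega), nb_of_gt (by omega), nb_of_gt (by omega)]; ring
  rcases eq_or_lt_of_le h with rfl | h
  · rw [nb_self hx, nb_self hx, nb_of_gt (by omega)]
    simp
  obtain ⟨b, rfl⟩ : ∃ b, m = k + b + 1 := ⟨m - k - 1, by omega⟩
  rw [nb, nb, nb, if_pos (by omega), if_pos (by omega), if_pos (by omega)]
  have e1 : k + b + 1 + 1 - (k + 1) = b + 1 := by omega
  have e2 : k + b + 1 - (k + 1) = b := by omega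
  have e3 : k + b + 1 - k = b + 1 := by omega
  have e4 : k + b + 1 - k = b + 1 := by omega
  rw [e1, e2, e3]
  rw [qPoch_succ x (k + b + 1), qPoch_succ x (k + b), qPoch_succ x b, qPoch_succ x k]
  have h1 := hx (k + b + 1)
  have h2 := hx (k + b)
  have h3 := hx b
  have h4 := hx k
  have h5 : (1 : F) - x * x ^ b ≠ 0 := by
    intro hh; apply hx (b + 1); rw [qPoch_succ]; simp [hh]
  have h6 : (1 : F) - x * x ^ k ≠ 0 := by
    intro hh; apply hx (k + 1); rw [qPoch_succ]; simp [hh]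
  field_simp
  ring

lemma pascal2 (hx : ∀ i, qPoch x x i ≠ 0) (m k : ℕ) :
    nb x (m + 1) (k + 1) = nb x m k + x ^ (k + 1) * nb x m (k + 1) := by
  rcases lt_or_ge m k with h | h
  · rw [nb_of_gt (by omega), nb_of_gt (by omega), nb_of_gt (by omega)]; ring
  rcases eq_or_lt_of_le h with rfl | h
  · rw [nb_self hx, nb_self hx, nb_of_gt (by omega)]
    simp
  obtain ⟨b, rfl⟩ : ∃ b, m = k + b + 1 := ⟨m - k - 1, by omega⟩
  rw [nb, nb, nb, if_pos (by omega), if_pos (by omega), if_pos (by omega)]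
  have e1 : k + b + 1 + 1 - (k + 1) = b + 1 := by omega
  have e2 : k + b + 1 - (k + 1) = b := by omega
  have e3 : k + b + 1 - k = b + 1 := by omega
  rw [e1, e2, e3]
  rw [qPoch_succ x (k + b + 1), qPoch_succ x (k + b), qPoch_succ x b, qPoch_succ x k]
  have h1 := hx (k + b + 1)
  have h2 := hx (k + b)
  have h3 := hx b
  have h4 := hx k
  have h5 : (1 : F) - x * x ^ b ≠ 0 := by
    intro hh; apply hx (b + 1); rw [qPoch_succ]; simp [hh]
  have h6 : (1 : F) - x * x ^ k ≠ 0 := by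
    intro hh; apply hx (k + 1); rw [qPoch_succ]; simp [hh]
  field_simp
  ring



/-- `A`-sum: true parameter `j+1`. -/
def Asum (j n : ℕ) : RatFunc ℚ :=
  ∑ k ∈ range (n + 1), q ^ k * nb (q ^ 2) (k + j) k * nb (q ^ 2) (n - k + j + 1) (j + 1)

def Bsum (j n : ℕ) : RatFunc ℚ :=
  ∑ k ∈ range (n + 1), q ^ k * nb (q ^ 2) (k + j) k * nb (q ^ 2) (n - k + j) j

lemma Asum_succ (j n : ℕ) : Asum j (n + 1) = Asum j n + q ^ (n + 1) * Bsum j (n + 1) := by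
  have split : Asum j (n + 1) =
      (∑ k ∈ range (n + 2), q ^ k * nb (q ^ 2) (k + j) k * nb (q ^ 2) (n + 1 - k + j) (j + 1))
      + ∑ k ∈ range (n + 2),
          q ^ k * (q ^ 2) ^ (n + 1 - k) * nb (q ^ 2) (k + j) k * nb (q ^ 2) (n + 1 - k + j) j := by
    rw [Asum, ← Finset.sum_add_distrib]
    refine Finset.sum_congr rfl fun k hk => ?_
    have hk' : k ≤ n + 1 := by simpa [Nat.lt_succ_iff] using hk
    have e : n + 1 - k + j + 1 = (n + 1 - k + j) + 1 := rfl
    rw [e, pascal1 hq2 (n + 1 - k + j) j]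
    have e2 : n + 1 - k + j - j = n + 1 - k := by omega
    rw [e2]
    ring
  rw [split]
  congr 1
  · -- first sum equals Asum j n
    rw [Finset.sum_range_succ]
    have last0 : nb (q ^ 2) (n + 1 - (n + 1) + j) (j + 1) = 0 := nb_of_gt (by omega)
    rw [last0, mul_zero, add_zero, Asum]
    refine Finset.sum_congr rfl fun k hk => ?_
    have hk' : k ≤ n := by simpa [Nat.lt_succ_iff] using hk
    have e : n + 1 - k + j = n - k + j + 1 := by omega
    rw [e]
  · -- second sum equals q^(n+1) * Bsum j (n+1)
    rw [Bsum, Finset.mul_sum]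
    rw [← Finset.sum_range_reflect]
    refine Finset.sum_congr rfl fun k hk => ?_
    have hk' : k ≤ n + 1 := by simpa [Nat.lt_succ_iff] using hk
    have e1 : n + 2 - 1 - k = n + 1 - k := by omega
    rw [e1]
    have e2 : n + 1 - (n + 1 - k) = k := by omega
    rw [e2]
    have s1 : nb (q ^ 2) (n + 1 - k + j) (n + 1 - k) = nb (q ^ 2) (n + 1 - k + j) j := by
      rw [nb_symm (by omega)]
      congr 1
      omega
    have s2 : nb (q ^ 2) (k + j) j = nb (q ^ 2) (k + j) k := by
      rw [nb_symm (by omega)]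
      congr 1
      omega
    rw [s1, s2]
    have epow : q ^ (n + 1 - k) * (q ^ 2) ^ k = q ^ (n + 1) * q ^ k := by
      rw [← pow_mul, ← pow_add, ← pow_add]
      congr 1
      omega
    calc q ^ (n + 1 - k) * (q ^ 2) ^ k * nb (q ^ 2) (n + 1 - k + j) j * nb (q ^ 2) (k + j) k
        = (q ^ (n + 1 - k) * (q ^ 2) ^ k) * (nb (q ^ 2) (k + j) k * nb (q ^ 2) (n + 1 - k + j) j) := by ring
      _ = q ^ (n + 1) * (q ^ k * nb (q ^ 2) (k + j) k * nb (q ^ 2) (n + 1 - k + j) j) := by rw [epow]; ring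

lemma Bsum_succ (j n : ℕ) :
    Bsum (j + 1) (n + 1) = Bsum (j + 1) n + q ^ (n + 1) * Asum j (n + 1) := by
  have split : Bsum (j + 1) (n + 1) =
      (∑ k ∈ range (n + 2), q ^ k * nb (q ^ 2) (k + j + 1) k * nb (q ^ 2) (n + 1 - k + j) (j + 1))
      + ∑ k ∈ range (n + 2),
          q ^ k * (q ^ 2) ^ (n + 1 - k) * nb (q ^ 2) (k + j + 1) k * nb (q ^ 2) (n + 1 - k + j) j := by
    rw [Bsum, ← Finset.sum_add_distrib]
    refine Finset.sum_congr rfl fun k hk => ?_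
    have e : n + 1 - k + (j + 1) = (n + 1 - k + j) + 1 := by omega
    have e3 : k + (j + 1) = k + j + 1 := by omega
    rw [e, e3, pascal1 hq2 (n + 1 - k + j) j]
    have e2 : n + 1 - k + j - j = n + 1 - k := by omega
    rw [e2]
    ring
  rw [split]
  congr 1
  · rw [Finset.sum_range_succ]
    have last0 : nb (q ^ 2) (n + 1 - (n + 1) + j) (j + 1) = 0 := nb_of_gt (by omega)
    rw [last0, mul_zero, add_zero, Bsum]
    refine Finset.sum_congr rfl fun k hk => ?_
    have hk' : k ≤ n := by simpa [Nat.lt_succ_iff] using hk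
    have e : n + 1 - k + j = n - k + (j + 1) := by omega
    have e3 : k + (j + 1) = k + j + 1 := by omega
    rw [e, e3]
  · rw [Asum, Finset.mul_sum]
    rw [← Finset.sum_range_reflect]
    refine Finset.sum_congr rfl fun k hk => ?_
    have hk' : k ≤ n + 1 := by simpa [Nat.lt_succ_iff] using hk
    have e1 : n + 2 - 1 - k = n + 1 - k := by omega
    rw [e1]
    have e2 : n + 1 - (n + 1 - k) = k := by omega
    rw [e2]
    have s1 : nb (q ^ 2) (n + 1 - k + j + 1) (n + 1 - k) = nb (q ^ 2) (n + 1 - k + j + 1) (j + 1) := by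
      rw [nb_symm (by omega)]
      congr 1
      omega
    have s2 : nb (q ^ 2) (k + j) j = nb (q ^ 2) (k + j) k := by
      rw [nb_symm (by omega)]
      congr 1
      omega
    rw [s1, s2]
    have epow : q ^ (n + 1 - k) * (q ^ 2) ^ k = q ^ (n + 1) * q ^ k := by
      rw [← pow_mul, ← pow_add, ← pow_add]
      congr 1
      omega
    calc q ^ (n + 1 - k) * (q ^ 2) ^ k * nb (q ^ 2) (n + 1 - k + j + 1) (j + 1) * nb (q ^ 2) (k + j) k
        = (q ^ (n + 1 - k) * (q ^ 2) ^ k) * (nb (q ^ 2) (k + j) k * nb (q ^ 2) (n + 1 - k + j + 1) (j + 1)) := by ring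
      _ = q ^ (n + 1) * (q ^ k * nb (q ^ 2) (k + j) k * nb (q ^ 2) (n + 1 - k + j + 1) (j + 1)) := by
          rw [epow]; ring

lemma nb_q_geom (n : ℕ) : nb q (n + 1) n = (q ^ (n + 1) - 1) / (q - 1) := by
  rw [nb, if_pos (by omega)]
  have e : n + 1 - n = 1 := by omega
  rw [e, qPoch_succ]
  have h1 : qPoch q q 1 = 1 - q := by rw [show (1:ℕ) = 0 + 1 from rfl, qPoch_succ, qPoch_zero]; ring_nf
  rw [h1]
  have hn := hq n
  have hq1 : (1 : RatFunc ℚ) - q ≠ 0 := by simpa using one_sub_q_pow_ne 1 one_pos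
  have hq1' : (q : RatFunc ℚ) - 1 ≠ 0 := fun h => hq1 (by linear_combination -h)
  field_simp
  ring

lemma Bsum_zero_eq (n : ℕ) : Bsum 0 n = nb q (n + 1) n := by
  have hq1 : (q : RatFunc ℚ) ≠ 1 := by
    intro h
    exact one_sub_q_pow_ne 1 one_pos (by rw [pow_one, h]; ring)
  rw [Bsum, nb_q_geom]
  rw [← geom_sum_eq hq1 (n + 1)]
  refine Finset.sum_congr rfl fun k hk => ?_
  simp only [Nat.add_zero]
  rw [nb_self hq2, nb_zero hq2]
  ring

lemma Asum_base (j : ℕ) : Asum j 0 = 1 := by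
  rw [Asum, Finset.sum_range_one]
  simp [nb_zero hq2, nb_self hq2]

lemma Bsum_base (j : ℕ) : Bsum j 0 = 1 := by
  rw [Bsum, Finset.sum_range_one]
  simp [nb_zero hq2, nb_self hq2]

lemma A_of_B (j : ℕ) (hB : ∀ n, Bsum j n = nb q (n + 2 * j + 1) n) :
    ∀ n, Asum j n = nb q (n + 2 * j + 2) n := by
  intro n
  induction n with
  | zero => rw [Asum_base, nb_zero hq]
  | succ n ih =>
    rw [Asum_succ, ih, hB (n + 1)]
    rw [show n + 1 + 2 * j + 1 = n + 2 * j + 2 from by omega,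
      show n + 1 + 2 * j + 2 = n + 2 * j + 2 + 1 from by omega]
    exact (pascal2 hq (n + 2 * j + 2) n).symm

lemma B_of_A (j : ℕ) (hA : ∀ n, Asum j n = nb q (n + 2 * j + 2) n) :
    ∀ n, Bsum (j + 1) n = nb q (n + 2 * (j + 1) + 1) n := by
  intro n
  induction n with
  | zero => rw [Bsum_base, nb_zero hq]
  | succ n ih =>
    rw [Bsum_succ, ih, hA (n + 1)]
    rw [show n + 1 + 2 * j + 2 = n + 2 * (j + 1) + 1 from by omega,
      show n + 1 + 2 * (j + 1) + 1 = n + 2 * (j + 1) + 1 + 1 from by omega]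
    exact (pascal2 hq (n + 2 * (j + 1) + 1) n).symm

lemma main_key (j : ℕ) : ∀ n, Asum j n = nb q (n + 2 * j + 2) n := by
  induction j with
  | zero =>
    refine A_of_B 0 fun n => ?_
    rw [Bsum_zero_eq]
  | succ j ih => exact A_of_B (j + 1) (B_of_A j ih)

lemma qBinom_natCast {F : Type*} [Field F] (x : F) (m k : ℕ) :
    qBinom x (m : ℤ) (k : ℤ) = nb x m k := by
  rw [qBinom, nb]
  by_cases h : k ≤ m
  · rw [if_pos ⟨Int.natCast_nonneg k, by exact_mod_cast h⟩, if_pos h]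
    have a1 : ((m : ℤ)).toNat = m := by omega
    have a2 : ((k : ℤ)).toNat = k := by omega
    have a3 : ((m : ℤ) - (k : ℤ)).toNat = m - k := by omega
    rw [a1, a2, a3]
  · rw [if_neg (by omega), if_neg h]

theorem stmt16 (n j : ℕ) (hj : 0 < j) :
    ∑ k ∈ Finset.range (n + 1),
      q ^ k * qBinom (q ^ 2) ((k : ℤ) + j - 1) (k : ℤ) *
        qBinom (q ^ 2) ((n : ℤ) - k + j) (j : ℤ)
    = qBinom q ((n : ℤ) + 2 * j) (n : ℤ) := by
  obtain ⟨j', rfl⟩ : ∃ j', j = j' + 1 := ⟨j - 1, by omega⟩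
  have R : ((n : ℤ) + 2 * (j' + 1 : ℕ)) = ((n + 2 * j' + 2 : ℕ) : ℤ) := by push_cast; ring
  rw [R, qBinom_natCast, ← main_key j' n, Asum]
  refine Finset.sum_congr rfl fun k hk => ?_
  have hk' : k ≤ n := by simpa [Nat.lt_succ_iff] using hk
  have e1 : ((k : ℤ) + (j' + 1 : ℕ) - 1) = ((k + j' : ℕ) : ℤ) := by push_cast; ring
  have e2 : ((n : ℤ) - k + (j' + 1 : ℕ)) = ((n - k + j' + 1 : ℕ) : ℤ) := by push_cast; omega
  have e3 : ((j' + 1 : ℕ) : ℤ) = ((j' + 1 : ℕ) : ℤ) := rfl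
  rw [e1, e2, qBinom_natCast, qBinom_natCast]

end
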